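/- If S : Π → ℝ is a function on finite probability distributions satisfying (i) continuity of p ↦ S(p, 1−p) on [0,1], (ii) normalization S(1/2,1/2) = log 2, (iii) symmetry under permutations of arguments, and (iv) the recursion S(p₁,…,p_{n−1}, η·pₙ, (1−η)·pₙ) = S(p₁,…,pₙ) + pₙ·S(η, 1−η) for all 0 ≤ η ≤ 1, then S(p₁,…,pₙ) = −∑ᵢ pᵢ log pᵢ (Khinchin–Faddeev characterization of Shannon entropy). -/

import Mathlib

open scoped BigOperators ComplexOrder
open Matrix

noncomputable section

/-- Finite-dimensional complex Hilbert space of dimension `m`. -/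
abbrev H (m : ℕ) := EuclideanSpace ℂ (Fin m)

/-- The tensor product `H m ⊗ H n`, realized as `EuclideanSpace ℂ (Fin m × Fin n)`. -/
abbrev HT (m n : ℕ) := EuclideanSpace ℂ (Fin m × Fin n)

/-- Elementary tensor `a ⊗ b`. -/
def tensorVec {m n : ℕ} (a : H m) (b : H n) : HT m n :=
  WithLp.toLp 2 fun (p : Fin m × Fin n) => a p.1 * b p.2

/-- The projection `|ψ⟩⟨ψ|` as a matrix. -/
def proj {m n : ℕ} (ψ : HT m n) : Matrix (Fin m × Fin n) (Fin m × Fin n) ℂ :=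
  Matrix.of fun x y => ψ x * (starRingEnd ℂ) (ψ y)

/-- The projection `|a⟩⟨a|` on a single factor. -/
def proj1 {m : ℕ} (a : H m) : Matrix (Fin m) (Fin m) ℂ :=
  Matrix.of fun i j => a i * (starRingEnd ℂ) (a j)

/-- Partial trace over the second factor. -/
def ptrace2 {m n : ℕ} (M : Matrix (Fin m × Fin n) (Fin m × Fin n) ℂ) :
    Matrix (Fin m) (Fin m) ℂ :=
  Matrix.of fun i j => ∑ k : Fin n, M (i, k) (j, k)

/-- Partial trace over the first factor. -/
def ptrace1 {m n : ℕ} (M : Matrix (Fin m × Fin n) (Fin m × Fin n) ℂ) :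
    Matrix (Fin n) (Fin n) ℂ :=
  Matrix.of fun i j => ∑ k : Fin m, M (k, i) (k, j)

/-- Von Neumann entropy `-Tr(ρ ln ρ)` of a Hermitian matrix, via its eigenvalues. -/
def vnEnt {k : ℕ} {M : Matrix (Fin k) (Fin k) ℂ} (h : M.IsHermitian) : ℝ :=
  ∑ i, Real.negMulLog (h.eigenvalues i)

/-- Kronecker product of square matrices. -/
def kron {m n : ℕ} (A : Matrix (Fin m) (Fin m) ℂ) (B : Matrix (Fin n) (Fin n) ℂ) :
    Matrix (Fin m × Fin n) (Fin m × Fin n) ℂ :=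
  Matrix.of fun p q => A p.1 q.1 * B p.2 q.2

/-- Action of a matrix on a vector. -/
def matVec {m n : ℕ} (M : Matrix (Fin m × Fin n) (Fin m × Fin n) ℂ) (ψ : HT m n) :
    HT m n := WithLp.toLp 2 fun (p : Fin m × Fin n) => ∑ q, M p q * ψ q

/-- The canonical pure state with Schmidt coefficients `μ`. -/
def stdVec {k : ℕ} (μ : Fin k → ℝ) : HT k k :=
  WithLp.toLp 2 fun (p : Fin k × Fin k) => if p.1 = p.2 then (Real.sqrt (μ p.1) : ℂ) else 0

/-- Strong Schmidt orthogonality: the supports of both reduced density matrices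
are orthogonal. -/
def SchmidtOrthogonal {m n : ℕ} (ψ φ : HT m n) : Prop :=
  ptrace2 (proj ψ) * ptrace2 (proj φ) = 0 ∧ ptrace1 (proj ψ) * ptrace1 (proj φ) = 0

/-- Image of `ψ` under the tensor product of two isometric embeddings. -/
def tensorMap {m n m' n' : ℕ} (f : H m →ₗᵢ[ℂ] H m') (g : H n →ₗᵢ[ℂ] H n')
    (ψ : HT m n) : HT m' n' :=
  WithLp.toLp 2 fun (p : Fin m' × Fin n') => ∑ q : Fin m × Fin n,
    ψ q * f (EuclideanSpace.single q.1 1) p.1 * g (EuclideanSpace.single q.2 1) p.2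

/-- Finite probability distribution. -/
def IsProbDist {k : ℕ} (p : Fin k → ℝ) : Prop := (∀ i, 0 ≤ p i) ∧ ∑ i, p i = 1

/-- Multiset of nonzero Schmidt coefficients of `ψ` (eigenvalues of the reduced
density matrix). -/
def schmidtMultiset {m n : ℕ} (ψ : HT m n) (h : (ptrace2 (proj ψ)).IsHermitian) :
    Multiset ℝ :=
  (Finset.univ.val.map h.eigenvalues).filter (· ≠ 0)

/-- Trace norm of a matrix. -/
def trNorm {a b : ℕ} (A : Matrix (Fin a) (Fin b) ℂ) : ℝ :=
  ∑ i, Real.sqrt ((Matrix.posSemidef_conjTranspose_mul_self A).1.eigenvalues i)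

/-- The greatest cross norm. -/
def gcn {m n : ℕ} (M : Matrix (Fin m × Fin n) (Fin m × Fin n) ℂ) : ℝ :=
  sInf { t : ℝ | ∃ (k : ℕ) (x : Fin k → Matrix (Fin m) (Fin m) ℂ)
    (y : Fin k → Matrix (Fin n) (Fin n) ℂ),
    M = ∑ i, kron (x i) (y i) ∧ t = ∑ i, trNorm (x i) * trNorm (y i) }

/-- Density operator. -/
def IsDensity {d : Type*} [Fintype d] [DecidableEq d] (M : Matrix d d ℂ) : Prop :=
  M.PosSemidef ∧ M.trace = 1

/-!
Write `U n` for the value of `S` at the uniform distribution on `n` points and `f x` for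
`S (x, 1 - x)`. Grouping the uniform distribution on `a + b` points into blocks of sizes `a` and
`b` gives `U (a + b) = f (a / (a + b)) + a / (a + b) * U a + b / (a + b) * U b`; in particular
`U` is completely additive, and `g n = U n - log n` satisfies
`(n + 1) g (n + 1) = n g n + (n + 1) (f - h) (1 / (n + 1))`, with `h` the binary entropy.
As `f` is continuous with `f 0 = 0`, a Cesàro argument gives `g (n + 1) - g n → 0`, and an
additive function with vanishing increments and `g 2 = 0` vanishes (Erdős). Hence `f = h` at all
rationals of `(0, 1)`, so on `[0, 1]` by continuity, and the recursion then determines `S` on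
every distribution by induction on its length.
-/

section

open Real Filter Topology Finset

theorem tendsto_sub_of_mul_succ_eq {g ε : ℕ → ℝ} (hε : Tendsto ε atTop (𝓝 0))
    (hg : ∀ n : ℕ, (n + 1) * g (n + 1) = n * g n + (n + 1) * ε n) :
    Tendsto (fun n => g (n + 1) - g n) atTop (𝓝 0) := by
  have hsum : ∀ n : ℕ, n * g n = ∑ k ∈ range n, (k + 1) * ε k := by
    intro n
    induction n with
    | zero => simp
    | succ n ih => rw [sum_range_succ, ← ih]; push_cast; exact hg n
  -- as `(k + 1) / (n + 1) ≤ 1`, `g n / (n + 1)` is dominated by a Cesàro mean of `|ε|`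
  have hbound : ∀ n ≥ 1,
      ‖g n / (n + 1)‖ ≤ (n : ℝ)⁻¹ * ∑ k ∈ range n, |ε k| := by
    intro n hn
    have hn' : (0 : ℝ) < n := by exact_mod_cast hn
    have hgn : g n = (n : ℝ)⁻¹ * ∑ k ∈ range n, (k + 1) * ε k := by
      rw [← hsum]; field_simp
    rw [Real.norm_eq_abs, hgn, abs_div, abs_mul, abs_inv, abs_of_pos hn',
      abs_of_pos (by positivity : (0 : ℝ) < n + 1), mul_div_assoc]
    gcongr
    rw [div_le_iff₀ (by positivity), sum_mul]
    refine (abs_sum_le_sum_abs _ _).trans (sum_le_sum fun k hk => ?_)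
    rw [abs_mul, abs_of_pos (by positivity : (0 : ℝ) < k + 1), mul_comm]
    have : (k : ℝ) + 1 ≤ n + 1 := by gcongr; exact_mod_cast (mem_range.1 hk).le
    gcongr
  have hdiv : Tendsto (fun n : ℕ => g n / (n + 1)) atTop (𝓝 0) :=
    squeeze_zero_norm' (eventually_atTop.2 ⟨1, hbound⟩) (by simpa using hε.abs.cesaro)
  have heq : ∀ n : ℕ, g (n + 1) - g n = ε n - g n / (n + 1) := by
    intro n
    have := hg n
    field_simp
    linarith
  simpa [heq] using hε.sub hdiv

theorem exists_abs_le_add_mul_log {γ : ℕ → ℝ}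
    (hmul : ∀ a b, 0 < a → 0 < b → γ (a * b) = γ a + γ b) (h2 : γ 2 = 0)
    (hΔ : Tendsto (fun n => γ (n + 1) - γ n) atTop (𝓝 0)) {ε : ℝ} (hε : 0 < ε) :
    ∃ K, ∀ n, |γ n| ≤ K + ε * Nat.log 2 n := by
  obtain ⟨T, hT⟩ := eventually_atTop.1 ((Metric.tendsto_nhds.1 hΔ) ε hε)
  have hdouble : ∀ q, 0 < q → γ (2 * q) = γ q := fun q hq => by
    rw [hmul 2 q two_pos hq, h2, zero_add]
  have hhalf : ∀ n ≥ 2 * T + 2, |γ n - γ (n / 2)| ≤ ε := by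
    intro n hn
    obtain ⟨q, rfl | rfl⟩ := n.even_or_odd'
    · rw [Nat.mul_div_cancel_left q two_pos, hdouble q (by omega), sub_self, abs_zero]
      exact hε.le
    · rw [show (2 * q + 1) / 2 = q by omega, ← hdouble q (by omega)]
      simpa [Real.dist_eq] using (hT (2 * q) (by omega)).le
  refine ⟨∑ i ∈ range (2 * T + 2), |γ i|, fun n => ?_⟩
  induction n using Nat.strong_induction_on with
  | _ n ih =>
    by_cases hn : n < 2 * T + 2
    · have : |γ n| ≤ ∑ i ∈ range (2 * T + 2), |γ i| :=
        single_le_sum (fun i _ => abs_nonneg (γ i)) (mem_range.2 hn)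
      have : 0 ≤ ε * Nat.log 2 n := by positivity
      linarith
    · replace hn := not_lt.1 hn
      have hlog : (Nat.log 2 (n / 2) : ℝ) = Nat.log 2 n - 1 := by
        rw [Nat.log_div_base, Nat.cast_sub (Nat.log_pos one_lt_two (by omega)), Nat.cast_one]
      have hhalf_le := ih (n / 2) (by omega)
      rw [hlog] at hhalf_le
      linarith [abs_sub_abs_le_abs_sub (γ n) (γ (n / 2)), hhalf n hn]

-- The case `γ 2 = 0` of Erdős's theorem: an additive function with `γ (n + 1) - γ n → 0` is a
-- multiple of `log`.
theorem eq_zero_of_map_mul_of_tendsto_sub {γ : ℕ → ℝ}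
    (hmul : ∀ a b, 0 < a → 0 < b → γ (a * b) = γ a + γ b) (h2 : γ 2 = 0)
    (hΔ : Tendsto (fun n => γ (n + 1) - γ n) atTop (𝓝 0)) {m : ℕ} (hm : 0 < m) :
    γ m = 0 := by
  set L := Nat.log 2 m
  have hpow : ∀ k : ℕ, γ (m ^ k) = k * γ m := by
    intro k
    induction k with
    | zero => simpa using hmul 1 1 one_pos one_pos
    | succ k ih => rw [pow_succ, hmul _ _ (by positivity) hm, ih]; push_cast; ring
  have hlog : ∀ k : ℕ, Nat.log 2 (m ^ k) ≤ k * (L + 1) := fun k => by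
    refine Nat.le_of_lt_succ (Nat.log_lt_of_lt_pow (by positivity) ?_)
    calc m ^ k ≤ (2 ^ (L + 1)) ^ k :=
          Nat.pow_le_pow_left (Nat.lt_pow_succ_log_self one_lt_two m).le k
      _ = 2 ^ (k * (L + 1)) := by rw [← pow_mul, mul_comm]
      _ < 2 ^ (k * (L + 1) + 1) := Nat.pow_lt_pow_succ one_lt_two
  suffices h : ∀ ε > 0, |γ m| ≤ ε * (L + 1) by
    refine abs_nonpos_iff.1 (le_of_forall_pos_le_add fun δ hδ => ?_)
    simpa [field] using h (δ / (L + 1)) (by positivity)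
  intro ε hε
  obtain ⟨K, hK⟩ := exists_abs_le_add_mul_log hmul h2 hΔ hε
  have hk : ∀ k : ℕ, 1 ≤ k → |γ m| ≤ K / k + ε * (L + 1) := by
    intro k hk
    have hk' : (0 : ℝ) < k := by exact_mod_cast hk
    have hKk := hK (m ^ k)
    rw [hpow, abs_mul, Nat.abs_cast] at hKk
    have hlogk : (Nat.log 2 (m ^ k) : ℝ) ≤ k * (L + 1) := by exact_mod_cast hlog k
    rw [div_add' _ _ _ hk'.ne', le_div_iff₀ hk']
    nlinarith
  have hlim := (tendsto_const_div_atTop_nhds_zero_nat K).add_const (ε * (L + 1))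
  exact ge_of_tendsto (by simpa using hlim) (eventually_atTop.2 ⟨1, hk⟩)

theorem Icc_subset_closure_fractions :
    Set.Icc (0 : ℝ) 1 ⊆ closure {x | ∃ a b : ℕ, 0 < a ∧ 0 < b ∧ x = a / (a + b)} := by
  have hrat : Set.Ioo (0 : ℝ) 1 ∩ Set.range ((↑) : ℚ → ℝ) ⊆
      {x | ∃ a b : ℕ, 0 < a ∧ 0 < b ∧ x = a / (a + b)} := by
    rintro _ ⟨⟨h0, h1⟩, q, rfl⟩
    have hq0 : 0 < q := by exact_mod_cast h0
    have hq1 : q < 1 := by exact_mod_cast h1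
    have hnum : 0 < q.num := Rat.num_pos.2 hq0
    have hlt : q.num < q.den := Rat.num_lt_denom_iff.2 hq1
    refine ⟨q.num.toNat, q.den - q.num.toNat, by omega, by omega, ?_⟩
    rw [Nat.cast_sub (by omega), add_sub_cancel, Rat.cast_def]
    congr 1
    exact_mod_cast (Int.toNat_of_nonneg hnum.le).symm
  calc Set.Icc (0 : ℝ) 1 = closure (Set.Ioo 0 1) := (closure_Ioo zero_ne_one).symm
    _ ⊆ closure (Set.Ioo 0 1 ∩ Set.range ((↑) : ℚ → ℝ)) :=
      closure_minimal (Rat.denseRange_cast.open_subset_closure_inter isOpen_Ioo) isClosed_closure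
    _ ⊆ _ := closure_mono hrat

namespace Entropy

def branch {n : ℕ} (p : Fin (n + 1) → ℝ) (η : ℝ) : Fin (n + 2) → ℝ :=
  Fin.snoc (Function.update p (Fin.last n) (η * p (Fin.last n))) ((1 - η) * p (Fin.last n))

def IsRecursive (S : ∀ n : ℕ, (Fin n → ℝ) → ℝ) : Prop :=
  ∀ (n : ℕ) (p : Fin (n + 1) → ℝ), IsProbDist p → ∀ η : ℝ, 0 ≤ η → η ≤ 1 →
    S (n + 2) (branch p η) = S (n + 1) p + p (Fin.last n) * S 2 ![η, 1 - η]

def IsSymmetric (S : ∀ n : ℕ, (Fin n → ℝ) → ℝ) : Prop :=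
  ∀ (n : ℕ) (p : Fin n → ℝ), IsProbDist p → ∀ σ : Equiv.Perm (Fin n),
    S n (p ∘ σ) = S n p

def uniformDist (n : ℕ) : Fin n → ℝ := fun _ => (n : ℝ)⁻¹

section branch

variable {n : ℕ} (p : Fin (n + 1) → ℝ) (η : ℝ)

@[simp] theorem branch_last : branch p η (Fin.last (n + 1)) = (1 - η) * p (Fin.last n) :=
  Fin.snoc_last _ _

@[simp] theorem branch_castSucc_last :
    branch p η (Fin.last n).castSucc = η * p (Fin.last n) := by
  simp [branch]

theorem branch_castSucc_of_ne {i : Fin (n + 1)} (hi : i ≠ Fin.last n) :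
    branch p η i.castSucc = p i := by
  simp [branch, Function.update_of_ne hi]

theorem sum_comp_branch (f : ℝ → ℝ) :
    ∑ i, f (branch p η i) = ∑ i, f (p i) - f (p (Fin.last n)) + f (η * p (Fin.last n))
      + f ((1 - η) * p (Fin.last n)) := by
  simp only [Fin.sum_univ_castSucc (n := n + 1), branch, Fin.snoc_castSucc, Fin.snoc_last,
    Function.apply_update (fun _ => f), Finset.sum_update_of_mem (Finset.mem_univ _),
    Finset.sdiff_singleton_eq_erase, Finset.sum_erase_eq_sub (Finset.mem_univ _)]
  ring

theorem isProbDist_branch {p : Fin (n + 1) → ℝ} (hp : IsProbDist p) {η : ℝ} (h0 : 0 ≤ η)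
    (h1 : η ≤ 1) : IsProbDist (branch p η) := by
  refine ⟨fun i => ?_, ?_⟩
  · have := hp.1 (Fin.last n)
    refine Fin.lastCases ?_ (fun j => ?_) i
    · simp only [branch_last]; nlinarith
    · by_cases hj : j = Fin.last n
      · subst hj; simp only [branch_castSucc_last]; positivity
      · rw [branch_castSucc_of_ne _ _ hj]; exact hp.1 j
  · have := sum_comp_branch p η id
    simp only [id, hp.2] at this
    rw [this]
    ring

end branch

theorem sum_negMulLog_branch {n : ℕ} (p : Fin (n + 1) → ℝ) (η : ℝ) :
    ∑ i, negMulLog (branch p η i) = ∑ i, negMulLog (p i) + p (Fin.last n) * binEntropy η := by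
  rw [sum_comp_branch, negMulLog_mul, negMulLog_mul, binEntropy_eq_negMulLog_add_negMulLog_one_sub]
  ring

theorem exists_isProbDist_eq_branch {n : ℕ} {q : Fin (n + 2) → ℝ} (hq : IsProbDist q) :
    ∃ p : Fin (n + 1) → ℝ, IsProbDist p ∧
      ∃ η, 0 ≤ η ∧ η ≤ 1 ∧ q = branch p η := by
  set a := q (Fin.last n).castSucc
  set b := q (Fin.last (n + 1))
  have ha : 0 ≤ a := hq.1 _
  have hb : 0 ≤ b := hq.1 _
  set p := Function.update (Fin.init q) (Fin.last n) (a + b)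
  have hp_last : p (Fin.last n) = a + b := Function.update_self ..
  have hp_ne : ∀ i, i ≠ Fin.last n → p i = q i.castSucc :=
    fun i hi => Function.update_of_ne hi ..
  have hηa : a / (a + b) * (a + b) = a := div_mul_cancel_of_imp fun h => by linarith
  refine ⟨p, ⟨fun i => ?_, ?_⟩, a / (a + b), by positivity,
    div_le_one_of_le₀ (by linarith) (by positivity), ?_⟩
  · by_cases hi : i = Fin.last n
    · rw [hi, hp_last]; positivity
    · rw [hp_ne i hi]; exact hq.1 _
  · have hq_sum := hq.2
    simp only [Fin.sum_univ_castSucc (n := n + 1), p, Fin.init,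
      Finset.sum_update_of_mem (Finset.mem_univ _), Finset.sdiff_singleton_eq_erase,
      Finset.sum_erase_eq_sub (Finset.mem_univ _)] at hq_sum ⊢
    linarith
  · ext i
    refine Fin.lastCases ?_ (fun j => ?_) i
    · rw [branch_last, hp_last]; linarith
    · by_cases hj : j = Fin.last n
      · rw [hj, branch_castSucc_last, hp_last, hηa]
      · rw [branch_castSucc_of_ne _ _ hj, hp_ne j hj]

variable {S : ∀ n : ℕ, (Fin n → ℝ) → ℝ}

theorem IsSymmetric.comp_equiv (hS : IsSymmetric S) {m n : ℕ} (e : Fin m ≃ Fin n)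
    {p : Fin n → ℝ} (hp : IsProbDist p) : S m (p ∘ e) = S n p := by
  obtain rfl := by simpa using Fintype.card_congr e
  exact hS m p hp e

theorem IsSymmetric.append_comm (hS : IsSymmetric S) {m n : ℕ} {p : Fin m → ℝ}
    {q : Fin n → ℝ} (hpq : IsProbDist (Fin.append q p)) :
    S (m + n) (Fin.append p q) = S (n + m) (Fin.append q p) := by
  rw [← hS.comp_equiv finAddFlip hpq]
  congr 1
  ext i
  refine Fin.addCases (fun j => ?_) (fun j => ?_) i <;> simp

theorem IsSymmetric.swap (hS : IsSymmetric S) {x y : ℝ} (h : IsProbDist ![x, y]) :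
    S 2 ![y, x] = S 2 ![x, y] := by
  rw [← hS 2 _ h (Equiv.swap 0 1)]
  congr 1
  ext i
  fin_cases i <;> simp

theorem isProbDist_append_mul {m k : ℕ} {p : Fin m → ℝ} {c : ℝ}
    (hp : IsProbDist (Fin.snoc p c)) {q : Fin k → ℝ} (hq : IsProbDist q) :
    IsProbDist (Fin.append p fun j => c * q j) := by
  have hc : 0 ≤ c := by simpa using hp.1 (Fin.last m)
  refine ⟨fun i => ?_, ?_⟩
  · refine Fin.addCases (fun j => ?_) (fun j => ?_) i
    · simpa using hp.1 j.castSucc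
    · simpa using mul_nonneg hc (hq.1 j)
  · rw [Fin.sum_univ_add]
    simp only [Fin.append_left, Fin.append_right, ← Finset.mul_sum, hq.2, mul_one]
    simpa [Fin.sum_univ_castSucc] using hp.2

theorem append_mul_branch {m k : ℕ} (p : Fin m → ℝ) (c : ℝ) (r : Fin (k + 1) → ℝ)
    (η : ℝ) :
    (Fin.append p fun j => c * branch r η j) =
      branch (n := m + k) (Fin.append (n := k + 1) p fun j => c * r j) η := by
  ext i
  refine Fin.addCases (fun j => ?_) (fun j => ?_) i
  · have hne : (Fin.castAdd (k + 1) j : Fin (m + k + 1)) ≠ Fin.last (m + k) := by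
      simp [Fin.ext_iff]; omega
    rw [Fin.append_left, show (Fin.castAdd (k + 2) j : Fin (m + k + 2))
      = (Fin.castAdd (k + 1) j).castSucc from rfl, branch_castSucc_of_ne _ _ hne, Fin.append_left]
  · refine Fin.lastCases ?_ (fun j => ?_) j
    · rw [Fin.append_right, show (Fin.natAdd m (Fin.last (k + 1)) : Fin (m + k + 2))
        = Fin.last (m + k + 1) from rfl, branch_last, branch_last,
        show Fin.last (m + k) = Fin.natAdd m (Fin.last k) from rfl, Fin.append_right]
      ring
    · rw [Fin.append_right, show (Fin.natAdd m j.castSucc : Fin (m + k + 2))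
        = (Fin.natAdd m j).castSucc from rfl]
      by_cases hj : j = Fin.last k
      · subst hj
        rw [branch_castSucc_last, show (Fin.natAdd m (Fin.last k)) = Fin.last (m + k) from rfl,
          branch_castSucc_last, show Fin.last (m + k) = Fin.natAdd m (Fin.last k) from rfl,
          Fin.append_right]
        ring
      · have hne : Fin.natAdd m j ≠ Fin.last (m + k) := by
          simpa [Fin.ext_iff, Fin.val_last] using fun h => hj (Fin.ext (by simp; omega))
        rw [branch_castSucc_of_ne _ _ hj, branch_castSucc_of_ne _ _ hne, Fin.append_right]

theorem IsRecursive.apply_one (hS : IsRecursive S) {p : Fin 1 → ℝ} (hp : IsProbDist p) :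
    S 1 p = 0 := by
  have hp0 : p 0 = 1 := by simpa using hp.2
  have hbranch : branch p 0 = ![0, 1 - 0] := by
    ext i
    fin_cases i <;> simp [branch, hp0, Fin.snoc]
  have := hS 0 p hp 0 le_rfl zero_le_one
  rw [hbranch, Fin.last_zero, hp0] at this
  linarith

theorem IsRecursive.apply_append_mul (hS : IsRecursive S) {m k : ℕ} {p : Fin m → ℝ} {c : ℝ}
    (hp : IsProbDist (Fin.snoc p c)) {q : Fin (k + 1) → ℝ} (hq : IsProbDist q) :
    S (m + (k + 1)) (Fin.append p fun j => c * q j) =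
      S (m + 1) (Fin.snoc p c) + c * S (k + 1) q := by
  induction k with
  | zero =>
    have hq0 : q 0 = 1 := by simpa using hq.2
    rw [Fin.append_right_eq_snoc, hq0, mul_one, hS.apply_one hq, mul_zero, add_zero]
  | succ k ih =>
    obtain ⟨r, hr, η, h0, h1, rfl⟩ := exists_isProbDist_eq_branch hq
    have hlast : (Fin.append p fun j : Fin (k + 1) => c * r j) (Fin.last (m + k)) =
        c * r (Fin.last k) := Fin.append_right (u := p) _ (Fin.last k)
    change S (m + k + 2) _ = _ + c * S (k + 2) _
    have ih := ih hr
    change S (m + k + 1) _ = _ at ih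
    rw [append_mul_branch, hS (m + k) _ (isProbDist_append_mul hp hr) η h0 h1, ih,
      hS k r hr η h0 h1, hlast]
    ring

theorem isProbDist_pair {x : ℝ} (h0 : 0 ≤ x) (h1 : x ≤ 1) : IsProbDist ![x, 1 - x] :=
  ⟨fun i => by fin_cases i <;> simp [h0, h1], by simp⟩

theorem IsRecursive.apply_zero_one (hS : IsRecursive S) (hsymm : IsSymmetric S) :
    S 2 ![0, 1] = 0 := by
  have hhalf : IsProbDist ![(1 : ℝ) / 2, 1 - 1 / 2] :=
    isProbDist_pair (by norm_num) (by norm_num)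
  have h01 : IsProbDist ![(0 : ℝ), 1 - 0] := isProbDist_pair le_rfl zero_le_one
  have hsplit := hS 1 _ hhalf 0 le_rfl zero_le_one
  have hmerge := hS 1 _ h01 (1 / 2) (by norm_num) (by norm_num)
  -- `(1/2, 0, 1/2)` branches `(1/2, 1/2)` and is a permutation of a branching of `(0, 1)`.
  have hperm : branch ![1 / 2, 1 - 1 / 2] 0 = branch ![0, 1 - 0] (1 / 2) ∘ Equiv.swap 0 1 := by
    ext i
    fin_cases i <;> simp [branch, Fin.snoc, Equiv.swap_apply_of_ne_of_ne]
  rw [hperm, hsymm 3 _ (isProbDist_branch h01 (by norm_num) (by norm_num))] at hsplit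
  norm_num [show (Fin.last 1 : Fin 2) = 1 from rfl] at hsplit hmerge
  linarith

theorem isProbDist_uniformDist {n : ℕ} (hn : 0 < n) : IsProbDist (uniformDist n) :=
  ⟨fun _ => by simp [uniformDist], by simp [uniformDist, hn.ne']⟩

theorem IsRecursive.uniform_add (hS : IsRecursive S) (hsymm : IsSymmetric S) {a b : ℕ}
    (ha : 0 < a) (hb : 0 < b) :
    S (a + b) (uniformDist (a + b)) = S 2 ![(a : ℝ) / (a + b), 1 - a / (a + b)]
      + a / (a + b) * S a (uniformDist a) + (1 - a / (a + b)) * S b (uniformDist b) := by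
  obtain ⟨a, rfl⟩ := Nat.exists_eq_add_one.2 ha
  obtain ⟨b, rfl⟩ := Nat.exists_eq_add_one.2 hb
  set x : ℝ := ((a + 1 : ℕ) : ℝ) / ((a + 1 : ℕ) + (b + 1 : ℕ))
  have hx0 : 0 ≤ x := by positivity
  have hx1 : x ≤ 1 := div_le_one_of_le₀ (le_add_of_nonneg_right (by positivity)) (by positivity)
  have hsplit : uniformDist (a + 1 + (b + 1)) =
      Fin.append (fun j => x * uniformDist (a + 1) j) fun j => (1 - x) * uniformDist (b + 1) j := by
    ext i
    refine Fin.addCases (fun j => ?_) (fun j => ?_) i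
    · simp only [uniformDist, Fin.append_left, x]
      push_cast
      field_simp
    · simp only [uniformDist, Fin.append_right, x]
      push_cast
      field_simp
      ring
  have hpair : IsProbDist (Fin.snoc ![1 - x] x) := by
    simpa [Fin.snoc] using isProbDist_pair (x := 1 - x) (by linarith) (by linarith)
  have hfirst : IsProbDist (Fin.snoc (fun j => x * uniformDist (a + 1) j) (1 - x)) := by
    refine ⟨fun i => ?_, ?_⟩
    · refine Fin.lastCases ?_ (fun j => ?_) i
      · simpa using hx1
      · simp only [Fin.snoc_castSucc, uniformDist]; positivity
    · simp [Fin.sum_univ_castSucc, ← mul_sum, (isProbDist_uniformDist ha).2]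
  have hsnoc : Fin.snoc (fun j => x * uniformDist (a + 1) j) (1 - x) =
      Fin.append (fun j => x * uniformDist (a + 1) j) ![1 - x] := by
    rw [Fin.append_right_eq_snoc]; rfl
  rw [hsplit, hS.apply_append_mul hfirst (isProbDist_uniformDist hb), hsnoc,
    hsymm.append_comm (isProbDist_append_mul hpair (isProbDist_uniformDist ha)),
    hS.apply_append_mul hpair (isProbDist_uniformDist ha)]
  have hsnoc' : (Fin.snoc ![1 - x] x : Fin 2 → ℝ) = ![1 - x, x] := by
    ext i
    fin_cases i <;> rfl
  change S 2 _ + _ + _ = _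
  rw [hsnoc', hsymm.swap (isProbDist_pair hx0 hx1)]

theorem IsRecursive.uniform_mul (hS : IsRecursive S) (hsymm : IsSymmetric S) {m n : ℕ}
    (hm : 0 < m) (hn : 0 < n) :
    S (m * n) (uniformDist (m * n)) = S m (uniformDist m) + S n (uniformDist n) := by
  set U : ℕ → ℝ := fun N => S N (uniformDist N)
  have hU1 : U 1 = 0 := hS.apply_one (isProbDist_uniformDist one_pos)
  change U (m * n) = U m + U n
  induction m, hm using Nat.le_induction with
  | base => simp [hU1]
  | succ m hm ih =>
    have hA := hS.uniform_add hsymm hn (mul_pos hm hn)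
    have hB := hS.uniform_add hsymm one_pos hm
    have hx : (n : ℝ) / (n + ↑(m * n)) = ((1 : ℕ) : ℝ) / ((1 : ℕ) + m) := by
      push_cast
      field_simp
    rw [hx] at hA
    change U (n + m * n) = _ + _ * U n + _ * U (m * n) at hA
    change U (1 + m) = _ + _ * U 1 + _ * U m at hB
    rw [show (m + 1) * n = n + m * n by ring, add_comm m 1]
    linear_combination hA - hB + (1 - ((1 : ℕ) : ℝ) / ((1 : ℕ) + m)) * ih
      - ((1 : ℕ) : ℝ) / ((1 : ℕ) + m) * hU1

theorem log_add_eq_binEntropy_add {a b : ℝ} (ha : 0 < a) (hb : 0 < b) :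
    log (a + b) =
      binEntropy (a / (a + b)) + a / (a + b) * log a + (1 - a / (a + b)) * log b := by
  have hab : 0 < a + b := by positivity
  have hsub : 1 - a / (a + b) = b / (a + b) := by field_simp; ring
  rw [hsub, binEntropy, hsub, inv_div, inv_div, log_div hab.ne' ha.ne',
    log_div hab.ne' hb.ne']
  field_simp
  ring

def uniformDefect (S : ∀ n : ℕ, (Fin n → ℝ) → ℝ) (n : ℕ) : ℝ :=
  S n (uniformDist n) - log n

def binaryDefect (S : ∀ n : ℕ, (Fin n → ℝ) → ℝ) (x : ℝ) : ℝ :=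
  S 2 ![x, 1 - x] - binEntropy x

theorem IsRecursive.uniformDefect_add (hS : IsRecursive S) (hsymm : IsSymmetric S) {a b : ℕ}
    (ha : 0 < a) (hb : 0 < b) :
    uniformDefect S (a + b) = binaryDefect S (a / (a + b))
      + a / (a + b) * uniformDefect S a + (1 - a / (a + b)) * uniformDefect S b := by
  have hlog := log_add_eq_binEntropy_add (a := a) (b := b) (by positivity) (by positivity)
  simp only [uniformDefect, binaryDefect, Nat.cast_add]
  linear_combination hS.uniform_add hsymm ha hb - hlog

theorem IsRecursive.uniformDefect_mul (hS : IsRecursive S) (hsymm : IsSymmetric S) {m n : ℕ}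
    (hm : 0 < m) (hn : 0 < n) :
    uniformDefect S (m * n) = uniformDefect S m + uniformDefect S n := by
  simp only [uniformDefect, Nat.cast_mul, log_mul (Nat.cast_pos.2 hm).ne' (Nat.cast_pos.2 hn).ne',
    hS.uniform_mul hsymm hm hn]
  ring

theorem continuousOn_binaryDefect
    (hcont : ContinuousOn (fun t : ℝ => S 2 ![t, 1 - t]) (Set.Icc 0 1)) :
    ContinuousOn (binaryDefect S) (Set.Icc 0 1) :=
  hcont.sub binEntropy_continuous.continuousOn

theorem IsRecursive.binaryDefect_zero (hS : IsRecursive S) (hsymm : IsSymmetric S) :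
    binaryDefect S 0 = 0 := by
  simp [binaryDefect, hS.apply_zero_one hsymm]

theorem IsRecursive.binaryDefect_one (hS : IsRecursive S) (hsymm : IsSymmetric S) :
    binaryDefect S 1 = 0 := by
  have := hsymm.swap (isProbDist_pair le_rfl zero_le_one)
  simp_all [binaryDefect, hS.apply_zero_one hsymm]

theorem IsRecursive.uniformDefect_eq_zero (hS : IsRecursive S) (hsymm : IsSymmetric S)
    (hcont : ContinuousOn (fun t : ℝ => S 2 ![t, 1 - t]) (Set.Icc 0 1))
    (hnorm : S 2 ![1 / 2, 1 / 2] = log 2) {n : ℕ} (hn : 0 < n) : uniformDefect S n = 0 := by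
  have hone : uniformDefect S 1 = 0 := by
    simp [uniformDefect, hS.apply_one (isProbDist_uniformDist one_pos)]
  have htwo : uniformDefect S 2 = 0 := by
    have := hS.uniformDefect_add hsymm one_pos one_pos
    norm_num [hone, binaryDefect, hnorm] at this
    rw [this, one_div, binEntropy_two_inv, sub_self]
  have hstep : ∀ k : ℕ, (k + 1) * uniformDefect S (k + 1) =
      k * uniformDefect S k + (k + 1) * binaryDefect S (1 / (k + 1)) := by
    intro k
    rcases k.eq_zero_or_pos with rfl | hk
    · simp [hone, hS.binaryDefect_one hsymm]
    · have := hS.uniformDefect_add hsymm one_pos hk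
      rw [add_comm 1 k] at this
      push_cast at this
      rw [this, hone, add_comm 1 (k : ℝ)]
      field_simp
      ring
  have hlim : Tendsto (fun k : ℕ => binaryDefect S (1 / (k + 1))) atTop (𝓝 0) := by
    have hmem : ∀ k : ℕ, 1 / ((k : ℝ) + 1) ∈ Set.Icc 0 1 :=
      fun k => ⟨by positivity, div_le_one_of_le₀ (by simp) (by positivity)⟩
    have := ((continuousOn_binaryDefect hcont) 0 ⟨le_rfl, zero_le_one⟩).tendsto.comp
      (tendsto_nhdsWithin_iff.2 ⟨tendsto_one_div_add_atTop_nhds_zero_nat, .of_forall hmem⟩)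
    rwa [hS.binaryDefect_zero hsymm] at this
  exact eq_zero_of_map_mul_of_tendsto_sub (fun a b => hS.uniformDefect_mul hsymm) htwo
    (tendsto_sub_of_mul_succ_eq hlim hstep) hn

theorem IsRecursive.binary_eq_binEntropy (hS : IsRecursive S) (hsymm : IsSymmetric S)
    (hcont : ContinuousOn (fun t : ℝ => S 2 ![t, 1 - t]) (Set.Icc 0 1))
    (hnorm : S 2 ![1 / 2, 1 / 2] = log 2) {x : ℝ} (hx : x ∈ Set.Icc 0 1) :
    S 2 ![x, 1 - x] = binEntropy x := by
  have hfrac :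
      Set.EqOn (binaryDefect S) 0 {x | ∃ a b : ℕ, 0 < a ∧ 0 < b ∧ x = a / (a + b)} := by
    rintro _ ⟨a, b, ha, hb, rfl⟩
    have := hS.uniformDefect_add hsymm ha hb
    simp only [hS.uniformDefect_eq_zero hsymm hcont hnorm, ha, hb, add_pos] at this
    simpa using this.symm
  have hsub : {x : ℝ | ∃ a b : ℕ, 0 < a ∧ 0 < b ∧ x = a / (a + b)} ⊆ Set.Icc 0 1 := by
    rintro _ ⟨a, b, -, -, rfl⟩
    exact ⟨by positivity,
      div_le_one_of_le₀ (le_add_of_nonneg_right (by positivity)) (by positivity)⟩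
  have := hfrac.of_subset_closure (continuousOn_binaryDefect hcont) continuousOn_const hsub
    Icc_subset_closure_fractions hx
  exact sub_eq_zero.1 this

theorem IsRecursive.eq_sum_negMulLog (hS : IsRecursive S)
    (hbin : ∀ x ∈ Set.Icc (0 : ℝ) 1, S 2 ![x, 1 - x] = binEntropy x) {n : ℕ}
    {p : Fin (n + 1) → ℝ} (hp : IsProbDist p) : S (n + 1) p = ∑ i, negMulLog (p i) := by
  induction n with
  | zero =>
    have hp0 : p 0 = 1 := by simpa using hp.2
    simp [hS.apply_one hp, hp0]
  | succ n ih =>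
    obtain ⟨r, hr, η, h0, h1, rfl⟩ := exists_isProbDist_eq_branch hp
    rw [hS n r hr η h0 h1, ih hr, hbin η ⟨h0, h1⟩, sum_negMulLog_branch]

end Entropy

end

/-- Khinchin–Faddeev characterization of Shannon entropy. -/
theorem khinchin_faddeev (S : ∀ n : ℕ, (Fin n → ℝ) → ℝ)
    (hcont : ContinuousOn (fun t : ℝ => S 2 ![t, 1 - t]) (Set.Icc 0 1))
    (hnorm : S 2 ![1/2, 1/2] = Real.log 2)
    (hsymm : ∀ (n : ℕ) (p : Fin n → ℝ), IsProbDist p → ∀ σ : Equiv.Perm (Fin n),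
      S n (p ∘ σ) = S n p)
    (hrec : ∀ (n : ℕ) (p : Fin (n + 1) → ℝ), IsProbDist p → ∀ η : ℝ, 0 ≤ η → η ≤ 1 →
      S (n + 2) (Fin.snoc (Function.update p (Fin.last n) (η * p (Fin.last n)))
          ((1 - η) * p (Fin.last n)))
        = S (n + 1) p + p (Fin.last n) * S 2 ![η, 1 - η]) :
    ∀ (n : ℕ) (p : Fin n → ℝ), IsProbDist p →
      S n p = ∑ i, Real.negMulLog (p i) := by
  intro n p hp
  obtain _ | n := n
  · simp [IsProbDist] at hp
  · exact Entropy.IsRecursive.eq_sum_negMulLog hrec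
      (fun x hx => Entropy.IsRecursive.binary_eq_binEntropy hrec hsymm hcont hnorm hx) hp

end
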